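/- Let B be a finite dimensional associative algebra over a field F of characteristic 0 equipped with an action of a Lie algebra 𝔤 by derivations. If B is 𝔤-simple (i.e., B·B ≠ 0 and the only 𝔤-invariant two-sided ideals are 0 and B), then B is a simple algebra. -/

import Mathlib

/-!
The trace form `K a b = tr (L (a * b))` of `B`, where `L` is left multiplication, is symmetric,
associative and skew for derivations, so its radical is a `𝔤`-invariant ideal; so is the span
`B·B` of all products, hence `B·B = B`. The radical is not all of `B`: otherwise
`tr (L c ^ k) = 0` for `k ≥ 2`, so in characteristic zero every `L c` is nilpotent, and by
Engel's theorem the lower central series of `B` over the Lie algebra of left multiplications,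
which is constantly `B·B = B`, reaches `0`. Thus `K` is nondegenerate. For an ideal `I`, the
ideal `I ∩ I^⊥` multiplies into the radical, so its elements `t` have `L (t * b)` of square
zero and lie in the radical too. Hence `B = I ⊕ I^⊥` with `I · I^⊥ = I^⊥ · I = 0`, so
`B = B·B` forces `I = I·I`, which every derivation maps into `I`.
-/

open Module LinearMap

namespace Module.End

variable {F V : Type*} [Field F] [CharZero F] [AddCommGroup V] [Module F V]
  [FiniteDimensional F V]

theorem finrank_eq_zero_of_isUnit_of_trace_pow_eq_zero {f : End F V} (hf : IsUnit f)
    (htr : ∀ k, trace F V (f ^ (k + 1)) = 0) : finrank F V = 0 := by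
  -- the trace of `f.charpoly.aeval f = 0` reduces to its constant term `χ(0) • id`
  have hχ : f.charpoly.coeff 0 * finrank F V = 0 := by
    have h := congr_arg (trace F V) (aeval_self_charpoly f)
    rw [Polynomial.aeval_eq_sum_range, map_sum, Finset.sum_range_succ'] at h
    simpa [htr] using h
  have hχ₀ : f.charpoly.coeff 0 ≠ 0 := by
    intro h₀
    apply (hf.map LinearMap.det).ne_zero
    rw [det_eq_sign_charpoly_coeff, h₀, mul_zero]
  exact_mod_cast (mul_eq_zero.mp hχ).resolve_left hχ₀

theorem isNilpotent_of_trace_pow_eq_zero (f : End F V)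
    (htr : ∀ k, trace F V (f ^ (k + 1)) = 0) : IsNilpotent f := by
  induction hn : finrank F V using Nat.strong_induction_on generalizing V with
  | _ n ih =>
  by_cases hrange : range f = ⊤
  · have hunit : IsUnit f := (isUnit_iff f).mpr
      ⟨injective_iff_surjective.mpr (range_eq_top.mp hrange), range_eq_top.mp hrange⟩
    have : Subsingleton V :=
      finrank_zero_iff.mp (finrank_eq_zero_of_isUnit_of_trace_pow_eq_zero hunit htr)
    exact Subsingleton.elim 0 f ▸ IsNilpotent.zero
  · have hmaps : ∀ x ∈ range f, f x ∈ range f := fun x _ => mem_range_self f x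
    have hpow_mem : ∀ k x, (f ^ (k + 1)) x ∈ range f := fun k x => by
      rw [pow_succ']
      exact mem_range_self f _
    obtain ⟨m, hm⟩ : IsNilpotent (f.restrict hmaps) := by
      refine ih _ (hn ▸ Submodule.finrank_lt hrange) _ (fun k => ?_) rfl
      rw [pow_restrict, trace_restrict_eq_of_forall_mem _ _ (hpow_mem k), htr]
    rw [pow_restrict] at hm
    refine ⟨m + 1, LinearMap.ext fun x => ?_⟩
    simpa [pow_succ] using
      congr_arg Subtype.val (LinearMap.congr_fun hm ⟨f x, mem_range_self f x⟩)

def IsDerivation {R B : Type*} [CommRing R] [NonUnitalRing B] [Module R B] (D : End R B) :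
    Prop :=
  ∀ a b, D (a * b) = D a * b + a * D b

end Module.End

namespace Submodule

variable {R B : Type*} [CommRing R] [NonUnitalRing B] [Module R B]

def IsTwoSidedIdeal (I : Submodule R B) : Prop :=
  ∀ a : B, ∀ x ∈ I, a * x ∈ I ∧ x * a ∈ I

-- The submodule `I * I`; `Submodule.mul` is only available for unital algebras.
def productSpan (I : Submodule R B) : Submodule R B :=
  span R (Set.image2 (· * ·) I I)

variable {I J P : Submodule R B} {D : End R B} {x y : B}

theorem mul_mem_productSpan (hx : x ∈ I) (hy : y ∈ I) : x * y ∈ productSpan I :=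
  subset_span (Set.mem_image2_of_mem hx hy)

theorem productSpan_le : productSpan I ≤ P ↔ ∀ x ∈ I, ∀ y ∈ I, x * y ∈ P := by
  rw [productSpan, span_le, Set.image2_subset_iff]
  rfl

theorem productSpan_top_isTwoSidedIdeal : (productSpan (⊤ : Submodule R B)).IsTwoSidedIdeal :=
  fun _ _ _ => ⟨mul_mem_productSpan trivial trivial, mul_mem_productSpan trivial trivial⟩

theorem map_mem_productSpan_top (hD : D.IsDerivation)
    (hx : x ∈ productSpan (⊤ : Submodule R B)) : D x ∈ productSpan (⊤ : Submodule R B) := by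
  refine productSpan_le (P := (productSpan ⊤).comap D) |>.mpr (fun a _ b _ => ?_) hx
  rw [mem_comap, hD]
  exact add_mem (mul_mem_productSpan trivial trivial) (mul_mem_productSpan trivial trivial)

theorem IsTwoSidedIdeal.map_mem_of_mem_productSpan (hI : I.IsTwoSidedIdeal)
    (hD : D.IsDerivation) (hx : x ∈ productSpan I) : D x ∈ I := by
  refine productSpan_le (P := I.comap D) |>.mpr (fun a ha b hb => ?_) hx
  rw [mem_comap, hD]
  exact add_mem (hI (D a) b hb).1 (hI (D b) a ha).2

theorem IsTwoSidedIdeal.inf (hI : I.IsTwoSidedIdeal) (hJ : J.IsTwoSidedIdeal) :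
    (I ⊓ J).IsTwoSidedIdeal := fun a _ hx =>
  ⟨⟨(hI a _ hx.1).1, (hJ a _ hx.2).1⟩, ⟨(hI a _ hx.1).2, (hJ a _ hx.2).2⟩⟩

theorem IsTwoSidedIdeal.mul_eq_zero_of_disjoint (hI : I.IsTwoSidedIdeal)
    (hJ : J.IsTwoSidedIdeal) (hIJ : Disjoint I J) (hx : x ∈ I) (hy : y ∈ J) : x * y = 0 :=
  disjoint_def.mp hIJ _ (hI y x hx).2 (hJ x y hy).1

theorem IsTwoSidedIdeal.le_productSpan_of_isCompl (hI : I.IsTwoSidedIdeal)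
    (hJ : J.IsTwoSidedIdeal) (hIJ : IsCompl I J) (hB : productSpan (⊤ : Submodule R B) = ⊤) :
    I ≤ productSpan I := by
  have hsplit : ∀ z : B, ∃ z₁ ∈ I, ∃ z₂ ∈ J, z₁ + z₂ = z := fun z =>
    mem_sup.mp (hIJ.sup_eq_top ▸ mem_top)
  have hle : productSpan ⊤ ≤ productSpan I ⊔ J := productSpan_le.mpr fun a _ b _ => by
    obtain ⟨a₁, ha₁, a₂, ha₂, rfl⟩ := hsplit a
    obtain ⟨b₁, hb₁, b₂, hb₂, rfl⟩ := hsplit b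
    rw [add_mul, mul_add, mul_add, hI.mul_eq_zero_of_disjoint hJ hIJ.disjoint ha₁ hb₂,
      hJ.mul_eq_zero_of_disjoint hI hIJ.disjoint.symm ha₂ hb₁, add_zero, zero_add]
    exact add_mem_sup (mul_mem_productSpan ha₁ hb₁) (hJ a₂ b₂ hb₂).1
  intro x hx
  obtain ⟨p, hp, q, hq, rfl⟩ := mem_sup.mp (hle (by rw [hB]; exact mem_top : x ∈ _))
  have hpI : p ∈ I := productSpan_le.mpr (fun a _ b hb => (hI a b hb).1) hp
  have hq0 : q = 0 := disjoint_def.mp hIJ.disjoint q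
    (by simpa using I.sub_mem hx hpI) hq
  simpa [hq0] using hp

end Submodule

attribute [local instance 100] LieRing.ofAssociativeRing

namespace NonUnitalAlgebra

open Submodule

variable (F B : Type*) [Field F] [NonUnitalRing B] [Module F B] [IsScalarTower F B B]
  [SMulCommClass F B B]

noncomputable def traceForm : LinearMap.BilinForm F B :=
  (mul F B).compr₂ (trace F B ∘ₗ mul F B)

variable {F B} {D : End F B} {I : Submodule F B}

theorem traceForm_apply (a b : B) : traceForm F B a b = trace F B (mul F B (a * b)) := rfl

theorem traceForm_assoc (a b c : B) :
    traceForm F B (a * b) c = traceForm F B a (b * c) := by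
  simp only [traceForm_apply, mul_assoc]

theorem mem_ker_traceForm {a : B} : a ∈ ker (traceForm F B) ↔ ∀ b, traceForm F B a b = 0 := by
  simp [LinearMap.ext_iff]

theorem mul_apply_mul (a b : B) : mul F B (a * b) = mul F B a * mul F B b :=
  map_mul (NonUnitalAlgHom.lmul F B) a b

theorem traceForm_comm (a b : B) : traceForm F B a b = traceForm F B b a := by
  rw [traceForm_apply, traceForm_apply, mul_apply_mul, mul_apply_mul, trace_mul_comm]

theorem traceForm_isRefl : (traceForm F B).IsRefl := fun a b h => (traceForm_comm b a).trans h

theorem traceForm_map_left_eq_neg (hD : D.IsDerivation) (a b : B) :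
    traceForm F B (D a) b = -traceForm F B a (D b) := by
  have hcomm : ∀ c, mul F B (D c) = D * mul F B c - mul F B c * D := fun c => by
    ext x
    simp [hD c x]
  rw [eq_neg_iff_add_eq_zero, traceForm_apply, traceForm_apply, ← map_add, ← map_add, ← hD,
    hcomm, map_sub, trace_mul_comm, sub_self]

theorem ker_traceForm_isTwoSidedIdeal : (ker (traceForm F B)).IsTwoSidedIdeal := by
  intro a x hx
  rw [mem_ker_traceForm] at hx
  refine ⟨mem_ker_traceForm.mpr fun b => ?_, mem_ker_traceForm.mpr fun b => ?_⟩
  · rw [traceForm_comm, ← traceForm_assoc, traceForm_comm, hx]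
  · rw [traceForm_assoc, hx]

theorem map_mem_ker_traceForm (hD : D.IsDerivation) {a : B}
    (ha : a ∈ ker (traceForm F B)) : D a ∈ ker (traceForm F B) := by
  rw [mem_ker_traceForm] at ha ⊢
  intro b
  rw [traceForm_map_left_eq_neg hD, ha, neg_zero]

theorem orthogonal_traceForm_isTwoSidedIdeal (hI : I.IsTwoSidedIdeal) :
    ((traceForm F B).orthogonal I).IsTwoSidedIdeal := by
  intro a y hy
  rw [BilinForm.mem_orthogonal_iff] at hy ⊢
  refine ⟨?_, ?_⟩ <;> intro x hx
  · rw [← traceForm_assoc, hy _ (hI a x hx).2]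
  · rw [traceForm_comm, traceForm_assoc, traceForm_comm, hy _ (hI a x hx).1]

theorem trace_mul_eq_zero_of_mul_self_eq_zero {c : B} (hc : c * c = 0) :
    trace F B (mul F B c) = 0 :=
  (isNilpotent_trace_of_isNilpotent ⟨2, by rw [sq, ← mul_apply_mul, hc, map_zero]⟩).eq_zero

theorem disjoint_orthogonal_traceForm (hK : ker (traceForm F B) = ⊥)
    (hI : I.IsTwoSidedIdeal) : Disjoint I ((traceForm F B).orthogonal I) := by
  set T := I ⊓ (traceForm F B).orthogonal I
  have hT : T.IsTwoSidedIdeal := hI.inf (orthogonal_traceForm_isTwoSidedIdeal hI)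
  have hsq : ∀ t ∈ T, ∀ t' ∈ T, t * t' = 0 := fun t ht t' ht' => by
    rw [← Submodule.mem_bot F, ← hK, mem_ker_traceForm]
    intro b
    rw [traceForm_assoc, traceForm_comm]
    exact ht.2 _ (hI b t' ht'.1).2
  refine Submodule.disjoint_def.mpr fun t htI htJ => ?_
  rw [← Submodule.mem_bot F, ← hK, mem_ker_traceForm]
  intro b
  have htb : t * b ∈ T := (hT b t ⟨htI, htJ⟩).2
  exact trace_mul_eq_zero_of_mul_self_eq_zero (hsq _ htb _ htb)

variable [FiniteDimensional F B]

theorem map_mem_of_ker_traceForm_eq_bot (hK : ker (traceForm F B) = ⊥)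
    (hB : productSpan (⊤ : Submodule F B) = ⊤) (hI : I.IsTwoSidedIdeal)
    (hD : D.IsDerivation) {x : B} (hx : x ∈ I) : D x ∈ I :=
  have hcompl := (BilinForm.isCompl_orthogonal_iff_disjoint traceForm_isRefl).mpr
    (disjoint_orthogonal_traceForm hK hI)
  hI.map_mem_of_mem_productSpan hD
    (hI.le_productSpan_of_isCompl (orthogonal_traceForm_isTwoSidedIdeal hI) hcompl hB hx)

theorem isNilpotent_mul_of_traceForm_eq_zero [CharZero F] (hK : traceForm F B = 0) (c : B) :
    IsNilpotent (mul F B c) := by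
  have hpow : ∀ n, ∃ d, mul F B c ^ (n + 1) = mul F B d := by
    intro n
    induction n with
    | zero => exact ⟨c, pow_one _⟩
    | succ n ih =>
      obtain ⟨d, hd⟩ := ih
      exact ⟨d * c, by rw [pow_succ, hd, mul_apply_mul]⟩
  -- `traceForm F B = 0` only controls the traces of `mul F B c ^ (k + 2)`, hence the square.
  obtain ⟨m, hm⟩ := End.isNilpotent_of_trace_pow_eq_zero (mul F B c ^ 2) fun k => by
    obtain ⟨d, hd⟩ := hpow (2 * k)
    rw [← pow_mul, show 2 * (k + 1) = 2 * k + 1 + 1 by ring, pow_succ, hd, ← mul_apply_mul,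
      ← traceForm_apply, hK, LinearMap.zero_apply, LinearMap.zero_apply]
  exact ⟨2 * m, by rw [pow_mul, hm]⟩

theorem subsingleton_of_forall_isNilpotent_mul (hnil : ∀ c : B, IsNilpotent (mul F B c))
    (hB : productSpan (⊤ : Submodule F B) = ⊤) : Subsingleton B := by
  let S : LieSubalgebra F (End F B) :=
    { toSubmodule := range (mul F B)
      lie_mem' := by
        rintro _ _ ⟨a, rfl⟩ ⟨b, rfl⟩
        exact ⟨a * b - b * a, by rw [map_sub, mul_apply_mul, mul_apply_mul, Ring.lie_def]⟩ }
  have : LieModule.IsNilpotent S B := (LieModule.isNilpotent_iff_forall' (R := F)).mpr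
    fun ⟨_, c, hc⟩ => hc ▸ hnil c
  obtain ⟨k, hk⟩ := LieModule.IsNilpotent.nilpotent F S B
  have hlie : ⁅(⊤ : LieIdeal F S), (⊤ : LieSubmodule F S B)⁆ = ⊤ := by
    rw [_root_.eq_top_iff, ← LieSubmodule.toSubmodule_le_toSubmodule,
      LieSubmodule.top_toSubmodule, ← hB]
    exact productSpan_le.mpr fun u _ v _ =>
      LieSubmodule.lie_mem_lie (x := (⟨mul F B u, u, rfl⟩ : S)) (LieSubmodule.mem_top _)
        (LieSubmodule.mem_top v)
  have htop : ∀ n, LieModule.lowerCentralSeries F S B n = ⊤ := by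
    intro n
    induction n with
    | zero => rfl
    | succ n ih => rw [LieModule.lowerCentralSeries_succ, ih, hlie]
  rw [htop] at hk
  exact (LieSubmodule.subsingleton_iff F S B).mp (subsingleton_of_bot_eq_top hk.symm)

theorem traceForm_ne_zero [CharZero F] [Nontrivial B]
    (hB : productSpan (⊤ : Submodule F B) = ⊤) : traceForm F B ≠ 0 := fun hK =>
  not_subsingleton B
    (subsingleton_of_forall_isNilpotent_mul (isNilpotent_mul_of_traceForm_eq_zero hK) hB)

end NonUnitalAlgebra

open Submodule NonUnitalAlgebra

/-- A finite dimensional associative algebra `B` over a field of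
characteristic `0` with an action of a Lie algebra `𝔤` by derivations which is `𝔤`-simple
(`B·B ≠ 0` and the only `𝔤`-invariant two-sided ideals are `0` and `B`) is simple. -/
theorem simple_of_gSimple_assoc
    (F : Type*) [Field F] [CharZero F]
    (B : Type*) [NonUnitalRing B] [Module F B] [IsScalarTower F B B] [SMulCommClass F B B]
    [FiniteDimensional F B]
    (𝔤 : Type*) [LieRing 𝔤] [LieAlgebra F 𝔤]
    -- `𝔤` acts on `B` by derivations
    (ρ : 𝔤 →ₗ⁅F⁆ Module.End F B)
    (hder : ∀ x : 𝔤, ∀ a b : B, ρ x (a * b) = ρ x a * b + a * ρ x b)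
    -- `B` is `𝔤`-simple
    (hBB : ∃ a b : B, a * b ≠ 0)
    (hgsimple : ∀ I : Submodule F B,
      (∀ a : B, ∀ x ∈ I, a * x ∈ I ∧ x * a ∈ I) →
      (∀ x : 𝔤, ∀ a ∈ I, ρ x a ∈ I) → I = ⊥ ∨ I = ⊤) :
    -- `B` is simple: `B·B ≠ 0` and it has no proper nonzero two-sided ideals
    (∃ a b : B, a * b ≠ 0) ∧
      ∀ I : Submodule F B, (∀ a : B, ∀ x ∈ I, a * x ∈ I ∧ x * a ∈ I) →
        I = ⊥ ∨ I = ⊤ := by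
  obtain ⟨a₀, b₀, hab₀⟩ := hBB
  have : Nontrivial B := ⟨⟨a₀ * b₀, 0, hab₀⟩⟩
  have hB : productSpan (⊤ : Submodule F B) = ⊤ :=
    (hgsimple _ productSpan_top_isTwoSidedIdeal fun x _ => map_mem_productSpan_top (hder x))
      |>.resolve_left fun h => hab₀ <| (Submodule.mem_bot F).mp <|
        h ▸ mul_mem_productSpan (I := ⊤) trivial trivial
  have hK : ker (traceForm F B) = ⊥ :=
    (hgsimple _ ker_traceForm_isTwoSidedIdeal fun x _ => map_mem_ker_traceForm (hder x))
      |>.resolve_right fun h => traceForm_ne_zero hB (ker_eq_top.mp h)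
  exact ⟨⟨a₀, b₀, hab₀⟩, fun I hI =>
    hgsimple I hI fun x _ => map_mem_of_ker_traceForm_eq_bot hK hB hI (hder x)⟩
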